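/- arXiv:2506.15141 — 6 statements merged into one kernel-verified Lean document; each statement's English description precedes it below -/
import Mathlib

section
/- There do not exist complex numbers a₁, a₂, a₃, a₁₂, a₁₃, a₂₃ and a real number c > 0 such that for all (z₁, z₂, z₃) ∈ ℂ³, setting ℓ₁ = a₁ − a₁₂z₂ − a₁₃z₃, ℓ₂ = a₂ + a₁₂z₁ − a₂₃z₃, ℓ₃ = a₃ + a₁₃z₁ + a₂₃z₂, one has |ℓ₁|² + |ℓ₂|² + |ℓ₃|² + |ℓ₁·conj(z₁) + ℓ₂·conj(z₂) + ℓ₃·conj(z₃)|² = c·(1 + |z₁|² + |z₂|² + |z₃|²). -/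
/-!
On the real line `z = t (e_i + I e_j)`, `t ∈ ℝ`, the `ℓ_k` are affine in `t` while
`∑ ℓ_k z̄_k = t (a_i - I a_j) - 2 I a_ij t²`, because the coefficient matrix of the `ℓ_k` is
skew-symmetric. So the left side is a quartic in `t` with leading coefficient `4 ‖a_ij‖²`, the right
side is quadratic, and the fourth finite difference gives `a_ij = 0`. What remains is
`‖a‖² + ‖∑ a_k z̄_k‖² = c (1 + ‖z‖²)`; at `z = 0` this says `‖a‖² = c`, at `z = e_k` it says
`‖a‖² + ‖a_k‖² = 2c`, and summing over `k` gives `4c = 6c`.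
-/

open Complex ComplexConjugate fwdDiff

theorem fwdDiff_iter_four_quartic (c₀ c₁ c₂ c₃ c₄ x : ℝ) :
    Δ_[1] ^[4] (fun t => c₀ + c₁ * t + c₂ * t ^ 2 + c₃ * t ^ 3 + c₄ * t ^ 4) x = 24 * c₄ := by
  simp [fwdDiff_iter_eq_sum_shift, Finset.sum_range_succ, Nat.choose]
  ring

theorem norm_add_ofReal_mul_sq (p q : ℂ) (t : ℝ) :
    ‖p + t * q‖ ^ 2 = ‖p‖ ^ 2 + 2 * (p * conj q).re * t + ‖q‖ ^ 2 * t ^ 2 := by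
  simp only [Complex.sq_norm, normSq_add, normSq_ofReal, map_mul, conj_ofReal]
  simp only [mul_left_comm p, re_ofReal_mul]
  ring

theorem fwdDiff_iter_four_norm_add_ofReal_mul_sq (p q : ℂ) (x : ℝ) :
    Δ_[1] ^[4] (fun t : ℝ => ‖p + t * q‖ ^ 2) x = 0 := by
  simpa [norm_add_ofReal_mul_sq] using
    fwdDiff_iter_four_quartic (‖p‖ ^ 2) (2 * (p * conj q).re) (‖q‖ ^ 2) 0 0 x

theorem fwdDiff_iter_four_norm_ofReal_mul_add_sq_mul (α β : ℂ) (x : ℝ) :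
    Δ_[1] ^[4] (fun t : ℝ => ‖t * α + t ^ 2 * β‖ ^ 2) x = 24 * ‖β‖ ^ 2 := by
  have hquartic (t : ℝ) : ‖t * α + t ^ 2 * β‖ ^ 2 =
      0 + 0 * t + ‖α‖ ^ 2 * t ^ 2 + 2 * (α * conj β).re * t ^ 3 + ‖β‖ ^ 2 * t ^ 4 := by
    rw [show (t : ℂ) * α + t ^ 2 * β = t * (α + t * β) by ring, norm_mul, mul_pow,
      norm_add_ofReal_mul_sq, norm_real, Real.norm_eq_abs, sq_abs]
    ring
  simp only [hquartic, fwdDiff_iter_four_quartic]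

theorem eq_zero_of_forall_norm_sq_eq_quadratic (p₁ q₁ p₂ q₂ p₃ q₃ α β : ℂ) (c₀ c₂ : ℝ)
    (h : ∀ t : ℝ, ‖p₁ + t * q₁‖ ^ 2 + ‖p₂ + t * q₂‖ ^ 2 + ‖p₃ + t * q₃‖ ^ 2
      + ‖t * α + t ^ 2 * β‖ ^ 2 = c₀ + c₂ * t ^ 2) : β = 0 := by
  have hquadratic : Δ_[1] ^[4] (fun t => c₀ + c₂ * t ^ 2) 0 = 0 := by
    simpa using fwdDiff_iter_four_quartic c₀ 0 c₂ 0 0 0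
  have h4 := congrFun (congrArg (Δ_[1] ^[4]) (funext h)) 0
  rw [hquadratic] at h4
  simp only [← Pi.add_def, fwdDiff_iter_add, Pi.add_apply, fwdDiff_iter_four_norm_add_ofReal_mul_sq, fwdDiff_iter_four_norm_ofReal_mul_add_sq_mul] at h4
  simpa using h4

def HasConstantNorm (a₁ a₂ a₃ a₁₂ a₁₃ a₂₃ : ℂ) (c : ℝ) : Prop :=
  ∀ z₁ z₂ z₃ : ℂ,
    ‖a₁ - a₁₂ * z₂ - a₁₃ * z₃‖ ^ 2 + ‖a₂ + a₁₂ * z₁ - a₂₃ * z₃‖ ^ 2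
      + ‖a₃ + a₁₃ * z₁ + a₂₃ * z₂‖ ^ 2
      + ‖(a₁ - a₁₂ * z₂ - a₁₃ * z₃) * conj z₁ + (a₂ + a₁₂ * z₁ - a₂₃ * z₃) * conj z₂
          + (a₃ + a₁₃ * z₁ + a₂₃ * z₂) * conj z₃‖ ^ 2
      = c * (1 + ‖z₁‖ ^ 2 + ‖z₂‖ ^ 2 + ‖z₃‖ ^ 2)

namespace HasConstantNorm

variable {a₁ a₂ a₃ a₁₂ a₁₃ a₂₃ : ℂ} {c : ℝ}

theorem swap₁₂ (h : HasConstantNorm a₁ a₂ a₃ a₁₂ a₁₃ a₂₃ c) :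
    HasConstantNorm a₂ a₁ a₃ (-a₁₂) a₂₃ a₁₃ c := fun z₁ z₂ z₃ => by
  have := h z₂ z₁ z₃
  ring_nf at this ⊢
  linarith

theorem swap₂₃ (h : HasConstantNorm a₁ a₂ a₃ a₁₂ a₁₃ a₂₃ c) :
    HasConstantNorm a₁ a₃ a₂ a₁₃ a₁₂ (-a₂₃) c := fun z₁ z₂ z₃ => by
  have := h z₁ z₃ z₂
  ring_nf at this ⊢
  linarith

theorem coeff₁₂_eq_zero (h : HasConstantNorm a₁ a₂ a₃ a₁₂ a₁₃ a₂₃ c) : a₁₂ = 0 := by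
  have hline := eq_zero_of_forall_norm_sq_eq_quadratic a₁ (-a₁₂ * I) a₂ a₁₂ a₃
    (a₁₃ + a₂₃ * I) (a₁ - I * a₂) (-2 * I * a₁₂) c (2 * c) fun t => by
      convert h t (t * I) 0 using 4
      all_goals
        try simp only [map_mul, conj_ofReal, conj_I, map_zero, norm_mul, norm_I, norm_real,
          Real.norm_eq_abs, mul_one, sq_abs, norm_zero]
        ring_nf
  simpa using hline

theorem const_eq_zero (h : HasConstantNorm a₁ a₂ a₃ 0 0 0 c) : c = 0 := by
  have h₀ := h 0 0 0
  have h₁ := h 1 0 0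
  have h₂ := h 0 1 0
  have h₃ := h 0 0 1
  norm_num at h₀ h₁ h₂ h₃
  linarith

end HasConstantNorm

/-- There do not exist complex numbers `a₁, a₂, a₃, a₁₂, a₁₃, a₂₃` and a real `c > 0` such that
for all `(z₁, z₂, z₃) ∈ ℂ³`, with `ℓ₁ = a₁ − a₁₂z₂ − a₁₃z₃`, `ℓ₂ = a₂ + a₁₂z₁ − a₂₃z₃`,
`ℓ₃ = a₃ + a₁₃z₁ + a₂₃z₂`, one has
`|ℓ₁|² + |ℓ₂|² + |ℓ₃|² + |ℓ₁ z̄₁ + ℓ₂ z̄₂ + ℓ₃ z̄₃|² = c (1 + |z₁|² + |z₂|² + |z₃|²)`. -/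
theorem no_constant_norm_section :
    ¬ ∃ (a₁ a₂ a₃ a₁₂ a₁₃ a₂₃ : ℂ) (c : ℝ), 0 < c ∧
      ∀ z₁ z₂ z₃ : ℂ,
        (‖a₁ - a₁₂ * z₂ - a₁₃ * z₃‖) ^ 2
        + (‖a₂ + a₁₂ * z₁ - a₂₃ * z₃‖) ^ 2
        + (‖a₃ + a₁₃ * z₁ + a₂₃ * z₂‖) ^ 2
        + (‖(a₁ - a₁₂ * z₂ - a₁₃ * z₃) * (starRingEnd ℂ z₁)
            + (a₂ + a₁₂ * z₁ - a₂₃ * z₃) * (starRingEnd ℂ z₂)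
            + (a₃ + a₁₃ * z₁ + a₂₃ * z₂) * (starRingEnd ℂ z₃)‖) ^ 2
        = c * (1 + (‖z₁‖) ^ 2 + (‖z₂‖) ^ 2 + (‖z₃‖) ^ 2) := by
  rintro ⟨a₁, a₂, a₃, a₁₂, a₁₃, a₂₃, c, hc, h⟩
  replace h : HasConstantNorm a₁ a₂ a₃ a₁₂ a₁₃ a₂₃ c := h
  have h₁₂ : a₁₂ = 0 := h.coeff₁₂_eq_zero
  have h₁₃ : a₁₃ = 0 := h.swap₂₃.coeff₁₂_eq_zero
  have h₂₃ : a₂₃ = 0 := h.swap₁₂.swap₂₃.coeff₁₂_eq_zero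
  subst h₁₂ h₁₃ h₂₃
  exact hc.ne' h.const_eq_zero
end

section
/- For all X = (X₁, X₂, X₃) and Y = (Y₁, Y₂, Y₃) in ℂ³, one has 2(|X₁Y₁|² + |X₂Y₂|² + |X₃Y₃|²) + |X₂Y₁|² + |X₂Y₃|² + 2Re(X₁·conj(X₂)·conj(Y₁)·Y₂) + 2Re(X₂·conj(X₃)·conj(Y₂)·Y₃) − 2Re(X₁·conj(X₃)·conj(Y₁)·Y₃) = |X₂Y₁|² + |X₂Y₃|² + |X₁·conj(Y₁) + X₂·conj(Y₂)|² + |X₁·conj(Y₁) − X₃·conj(Y₃)|² + |X₂·conj(Y₂) + X₃·conj(Y₃)|²; in particular the left-hand side is nonnegative. -/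
open Complex ComplexConjugate

/-! With `u i = X i * conj (Y i)` one has `‖X i * Y i‖ = ‖u i‖`, and the three mixed terms are
`Re ⟪u i, u j⟫`. Apart from `‖X 1 * Y 0‖² + ‖X 1 * Y 2‖²`, the left-hand side is thus
`2 (‖u 0‖² + ‖u 1‖² + ‖u 2‖²) + 2 Re ⟪u 0, u 1⟫ + 2 Re ⟪u 1, u 2⟫ - 2 Re ⟪u 0, u 2⟫`, which is
`‖u 0 + u 1‖² + ‖u 0 - u 2‖² + ‖u 1 + u 2‖²` in any inner product space. -/

theorem norm_add_sq_add_norm_sub_sq_add_norm_add_sq {𝕜 E : Type*} [RCLike 𝕜]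
    [SeminormedAddCommGroup E] [InnerProductSpace 𝕜 E] (a b c : E) :
    ‖a + b‖ ^ 2 + ‖a - c‖ ^ 2 + ‖b + c‖ ^ 2
      = 2 * (‖a‖ ^ 2 + ‖b‖ ^ 2 + ‖c‖ ^ 2) + 2 * RCLike.re (inner 𝕜 a b)
        + 2 * RCLike.re (inner 𝕜 b c) - 2 * RCLike.re (inner 𝕜 a c) := by
  rw [norm_add_sq (𝕜 := 𝕜), norm_sub_sq (𝕜 := 𝕜), norm_add_sq (𝕜 := 𝕜)]
  ring

/-- The Chern bisectional curvature of the Wallach threefold is a sum of squares, hence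
nonnegative. -/
theorem wallach_bisectional_curvature (X Y : Fin 3 → ℂ) :
    2 * ((‖(X 0 * Y 0)‖) ^ 2 + (‖(X 1 * Y 1)‖) ^ 2
        + (‖(X 2 * Y 2)‖) ^ 2)
      + (‖(X 1 * Y 0)‖) ^ 2 + (‖(X 1 * Y 2)‖) ^ 2
      + 2 * (X 0 * (starRingEnd ℂ (X 1)) * (starRingEnd ℂ (Y 0)) * Y 1).re
      + 2 * (X 1 * (starRingEnd ℂ (X 2)) * (starRingEnd ℂ (Y 1)) * Y 2).re
      - 2 * (X 0 * (starRingEnd ℂ (X 2)) * (starRingEnd ℂ (Y 0)) * Y 2).re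
    = (‖(X 1 * Y 0)‖) ^ 2 + (‖(X 1 * Y 2)‖) ^ 2
      + (‖(X 0 * (starRingEnd ℂ (Y 0)) + X 1 * (starRingEnd ℂ (Y 1)))‖) ^ 2
      + (‖(X 0 * (starRingEnd ℂ (Y 0)) - X 2 * (starRingEnd ℂ (Y 2)))‖) ^ 2
      + (‖(X 1 * (starRingEnd ℂ (Y 1)) + X 2 * (starRingEnd ℂ (Y 2)))‖) ^ 2
    ∧ 0 ≤ 2 * ((‖(X 0 * Y 0)‖) ^ 2 + (‖(X 1 * Y 1)‖) ^ 2
        + (‖(X 2 * Y 2)‖) ^ 2)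
      + (‖(X 1 * Y 0)‖) ^ 2 + (‖(X 1 * Y 2)‖) ^ 2
      + 2 * (X 0 * (starRingEnd ℂ (X 1)) * (starRingEnd ℂ (Y 0)) * Y 1).re
      + 2 * (X 1 * (starRingEnd ℂ (X 2)) * (starRingEnd ℂ (Y 1)) * Y 2).re
      - 2 * (X 0 * (starRingEnd ℂ (X 2)) * (starRingEnd ℂ (Y 0)) * Y 2).re := by
  set u : Fin 3 → ℂ := fun i => X i * conj (Y i)
  have hnorm (i : Fin 3) : ‖X i * Y i‖ = ‖u i‖ := by simp [u]
  have hcross (i j : Fin 3) :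
      (X i * conj (X j) * conj (Y i) * Y j).re = RCLike.re (inner ℂ (u i) (u j)) := by
    rw [inner_re_symm, RCLike.inner_apply, RCLike.re_to_complex]
    simp only [u, map_mul, conj_conj]
    congr 1
    ring
  suffices h : _ from ⟨h, h ▸ by positivity⟩
  rw [hnorm, hnorm, hnorm, hcross, hcross, hcross]
  linarith [norm_add_sq_add_norm_sub_sq_add_norm_add_sq (𝕜 := ℂ) (u 0) (u 1) (u 2)]
end

section
/- For all X = (X₁, X₂, X₃) ∈ ℂ³ one has 2(|X₁|⁴ + |X₂|⁴ + |X₃|⁴) + 3|X₁X₂|² + 3|X₂X₃|² − 2|X₁X₃|² = |X₁X₂|² + |X₂X₃|² + (|X₁|² + |X₂|²)² + (|X₁|² − |X₃|²)² + (|X₂|² + |X₃|²)², and this quantity is strictly positive whenever X ≠ 0. -/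
open Complex

/-!
With `a = |X₁|`, `b = |X₂|`, `c = |X₃|` both sides are real quartic forms in `a, b, c`, and the
identity is a polynomial identity. Positivity then only needs the squares
`(a² + b²)²` and `(b² + c²)²`, which cannot both vanish unless `a = b = c = 0`.
-/

section WallachQuartic

variable {R : Type*}

theorem wallach_quartic_eq_sum_sq [CommRing R] (a b c : R) :
    2 * (a ^ 4 + b ^ 4 + c ^ 4) + 3 * (a * b) ^ 2 + 3 * (b * c) ^ 2 - 2 * (a * c) ^ 2 =
      (a * b) ^ 2 + (b * c) ^ 2 + (a ^ 2 + b ^ 2) ^ 2 + (a ^ 2 - c ^ 2) ^ 2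
        + (b ^ 2 + c ^ 2) ^ 2 := by
  ring

theorem wallach_quartic_pos [CommRing R] [LinearOrder R] [IsStrictOrderedRing R] {a b c : R}
    (h : a ≠ 0 ∨ b ≠ 0 ∨ c ≠ 0) :
    0 < 2 * (a ^ 4 + b ^ 4 + c ^ 4) + 3 * (a * b) ^ 2 + 3 * (b * c) ^ 2 - 2 * (a * c) ^ 2 := by
  rw [wallach_quartic_eq_sum_sq]
  rcases h with h | h | h <;> positivity

end WallachQuartic

/-- The Chern holomorphic sectional curvature of the Wallach threefold is a sum of squares,
and is strictly positive for `X ≠ 0`. -/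
theorem wallach_holomorphic_sectional_curvature (X : Fin 3 → ℂ) :
    2 * ((‖X 0‖) ^ 4 + (‖X 1‖) ^ 4 + (‖X 2‖) ^ 4)
      + 3 * (‖X 0 * X 1‖) ^ 2 + 3 * (‖X 1 * X 2‖) ^ 2
      - 2 * (‖X 0 * X 2‖) ^ 2
    = (‖X 0 * X 1‖) ^ 2 + (‖X 1 * X 2‖) ^ 2
      + ((‖X 0‖) ^ 2 + (‖X 1‖) ^ 2) ^ 2
      + ((‖X 0‖) ^ 2 - (‖X 2‖) ^ 2) ^ 2
      + ((‖X 1‖) ^ 2 + (‖X 2‖) ^ 2) ^ 2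
    ∧ (X ≠ 0 →
      0 < 2 * ((‖X 0‖) ^ 4 + (‖X 1‖) ^ 4 + (‖X 2‖) ^ 4)
        + 3 * (‖X 0 * X 1‖) ^ 2 + 3 * (‖X 1 * X 2‖) ^ 2
        - 2 * (‖X 0 * X 2‖) ^ 2) := by
  simp only [norm_mul]
  refine ⟨wallach_quartic_eq_sum_sq _ _ _, fun hX => wallach_quartic_pos ?_⟩
  obtain ⟨i, hi⟩ := Function.ne_iff.mp hX
  fin_cases i <;> simp_all
end

section
/- For all complex numbers u, v, p, q: |up|² − Re(u²·conj(p)²) + |vq|² − Re(v²·conj(q)²) + (1/4)(|uq|² + |vp|²) − (5/2)·Re(u·conj(v)·conj(p)·q) + 2·Re(u·v·conj(p)·conj(q)) = 2·(Im(u·conj(p)) − Im(v·conj(q)))² + (1/4)·|uq − vp|². In particular the left-hand side is nonnegative. -/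
/-!
With `z = u p̄` and `w = v q̄`, the first two pairs of terms are `‖z‖² - Re z² = 2 (Im z)²` and
`‖w‖² - Re w² = 2 (Im w)²`, the two mixed terms are `Re (z w)` and `Re (z w̄)`, whose difference is
`-2 Im z Im w`, and `‖uq - vp‖² = ‖uq‖² + ‖vp‖² - 2 Re (z w̄)`. Collecting terms gives the
sum of squares.
-/

open Complex ComplexConjugate

namespace Complex

theorem sq_norm_sub_re_sq (z : ℂ) : ‖z‖ ^ 2 - (z ^ 2).re = 2 * z.im ^ 2 := by
  rw [Complex.sq_norm, normSq_apply, sq, mul_re]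
  ring

theorem sq_norm_mul_sub_re_sq_mul_conj_sq (a b : ℂ) :
    ‖a * b‖ ^ 2 - (a ^ 2 * conj b ^ 2).re = 2 * (a * conj b).im ^ 2 := by
  rw [← mul_pow, ← sq_norm_sub_re_sq, norm_mul, norm_mul, RCLike.norm_conj]

theorem re_mul_sub_re_mul_conj (z w : ℂ) :
    (z * w).re - (z * conj w).re = -2 * (z.im * w.im) := by
  simp only [mul_re, conj_re, conj_im]
  ring

theorem sq_norm_sub (a b : ℂ) : ‖a - b‖ ^ 2 = ‖a‖ ^ 2 + ‖b‖ ^ 2 - 2 * (a * conj b).re := by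
  simp only [Complex.sq_norm, normSq_sub]

end Complex

/-- Sum-of-squares identity for the term `F₁₃` in the Riemannian sectional curvature of the
Wallach threefold; in particular the left-hand side is nonnegative. -/
theorem wallach_F13_sos (u v p q : ℂ) :
    (‖u * p‖) ^ 2 - (u ^ 2 * (starRingEnd ℂ p) ^ 2).re
      + (‖v * q‖) ^ 2 - (v ^ 2 * (starRingEnd ℂ q) ^ 2).re
      + (1 / 4) * ((‖u * q‖) ^ 2 + (‖v * p‖) ^ 2)
      - (5 / 2) * (u * (starRingEnd ℂ v) * (starRingEnd ℂ p) * q).re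
      + 2 * (u * v * (starRingEnd ℂ p) * (starRingEnd ℂ q)).re
    = 2 * ((u * (starRingEnd ℂ p)).im - (v * (starRingEnd ℂ q)).im) ^ 2
      + (1 / 4) * (‖u * q - v * p‖) ^ 2
    ∧ 0 ≤ (‖u * p‖) ^ 2 - (u ^ 2 * (starRingEnd ℂ p) ^ 2).re
      + (‖v * q‖) ^ 2 - (v ^ 2 * (starRingEnd ℂ q) ^ 2).re
      + (1 / 4) * ((‖u * q‖) ^ 2 + (‖v * p‖) ^ 2)
      - (5 / 2) * (u * (starRingEnd ℂ v) * (starRingEnd ℂ p) * q).re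
      + 2 * (u * v * (starRingEnd ℂ p) * (starRingEnd ℂ q)).re := by
  have hu := sq_norm_mul_sub_re_sq_mul_conj_sq u p
  have hv := sq_norm_mul_sub_re_sq_mul_conj_sq v q
  have hmixed : (u * v * conj p * conj q).re - (u * conj v * conj p * q).re
      = -2 * ((u * conj p).im * (v * conj q).im) := by
    convert re_mul_sub_re_mul_conj (u * conj p) (v * conj q) using 3
    · ring
    · rw [map_mul, conj_conj]
      ring
  have hdiff : ‖u * q - v * p‖ ^ 2
      = ‖u * q‖ ^ 2 + ‖v * p‖ ^ 2 - 2 * (u * conj v * conj p * q).re := by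
    rw [sq_norm_sub, map_mul]
    ring_nf
  refine (and_iff_left_of_imp fun hsos => hsos ▸ by positivity).2 ?_
  linear_combination hu + hv + 2 * hmixed - (1 / 4) * hdiff
end

section
/- For all complex numbers u, v, p, q: |up|² − Re(u²·conj(p)²) + |vq|² − Re(v²·conj(q)²) + (1/4)(|uq|² + |vp|²) + 2·Re(u·conj(v)·conj(p)·q) − (5/2)·Re(u·v·conj(p)·conj(q)) = 2·(Im(u·conj(p)) + Im(v·conj(q)))² + (1/4)·|u·conj(q) − p·conj(v)|². In particular the left-hand side is nonnegative. -/
open Complex ComplexConjugate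

/-!
Put `z = u * conj p` and `w = v * conj q`. Then `‖u p‖² - Re (u² p̄²) = ‖z‖² - Re (z²) = 2 (Im z)²`,
likewise for `w`, the two mixed terms are `Re (z w̄)` and `Re (z w)`, and
`‖u q̄ - p v̄‖² = ‖u q‖² + ‖v p‖² - 2 Re (z w)`. Comparing both sides therefore reduces to
`Re (z w̄) - Re (z w) = 2 Im z Im w`.
-/

namespace Complex

theorem re_mul_conj_sub_re_mul (z w : ℂ) :
    (z * conj w).re - (z * w).re = 2 * (z.im * w.im) := by
  simp only [mul_re, conj_re, conj_im]
  ring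

theorem sq_norm_mul_conj_sub_mul_conj (u v p q : ℂ) :
    ‖u * conj q - p * conj v‖ ^ 2
      = ‖u * q‖ ^ 2 + ‖v * p‖ ^ 2 - 2 * ((u * conj p) * (v * conj q)).re := by
  have hcross : u * conj q * conj (p * conj v) = u * conj p * (v * conj q) := by
    simp only [map_mul, conj_conj]
    ring
  simp only [Complex.sq_norm, normSq_sub, hcross, normSq_mul, normSq_conj]
  ring

end Complex

/-- Sum-of-squares identity for the terms `F₁₂`, `F₂₃` in the Riemannian sectional curvature of
the Wallach threefold; in particular the left-hand side is nonnegative. -/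
theorem wallach_F12_sos (u v p q : ℂ) :
    (‖u * p‖) ^ 2 - (u ^ 2 * (starRingEnd ℂ p) ^ 2).re
      + (‖v * q‖) ^ 2 - (v ^ 2 * (starRingEnd ℂ q) ^ 2).re
      + (1 / 4) * ((‖u * q‖) ^ 2 + (‖v * p‖) ^ 2)
      + 2 * (u * (starRingEnd ℂ v) * (starRingEnd ℂ p) * q).re
      - (5 / 2) * (u * v * (starRingEnd ℂ p) * (starRingEnd ℂ q)).re
    = 2 * ((u * (starRingEnd ℂ p)).im + (v * (starRingEnd ℂ q)).im) ^ 2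
      + (1 / 4) * (‖u * (starRingEnd ℂ q) - p * (starRingEnd ℂ v)‖) ^ 2
    ∧ 0 ≤ (‖u * p‖) ^ 2 - (u ^ 2 * (starRingEnd ℂ p) ^ 2).re
      + (‖v * q‖) ^ 2 - (v ^ 2 * (starRingEnd ℂ q) ^ 2).re
      + (1 / 4) * ((‖u * q‖) ^ 2 + (‖v * p‖) ^ 2)
      + 2 * (u * (starRingEnd ℂ v) * (starRingEnd ℂ p) * q).re
      - (5 / 2) * (u * v * (starRingEnd ℂ p) * (starRingEnd ℂ q)).re := by
  refine (fun hsos => ⟨hsos, hsos ▸ by positivity⟩) ?_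
  set z := u * conj p
  set w := v * conj q
  have hz : ‖u * p‖ ^ 2 - (u ^ 2 * conj p ^ 2).re = 2 * z.im ^ 2 := by
    rw [← sq_norm_sub_re_sq, ← mul_pow, norm_mul, norm_mul, norm_conj]
  have hw : ‖v * q‖ ^ 2 - (v ^ 2 * conj q ^ 2).re = 2 * w.im ^ 2 := by
    rw [← sq_norm_sub_re_sq, ← mul_pow, norm_mul, norm_mul, norm_conj]
  have hzw_conj : u * conj v * conj p * q = z * conj w := by
    simp only [z, w, map_mul, conj_conj]
    ring
  have hzw : u * v * conj p * conj q = z * w := by ring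
  rw [sq_norm_mul_conj_sub_mul_conj, hzw_conj, hzw]
  linear_combination hz + hw + 2 * re_mul_conj_sub_re_mul z w
end

section
/- Let a > 0 be a real number, let s, t ∈ ℝ with (s,t) ≠ (0,0), and let 𝔤 be a complex Lie algebra admitting a basis (e₁, e₂, e₃, f₁, f₂, f₃) whose only nonzero brackets among basis vectors (up to antisymmetry) are: [e₁,e₃] = −is·e₁, [e₁,f₃] = −is·e₁, [f₁,f₃] = is·f₁, [f₁,e₃] = is·f₁, [e₂,e₃] = −it·e₂, [e₂,f₃] = −it·e₂, [f₂,f₃] = it·f₂, [f₂,e₃] = it·f₂, [e₁,f₁] = a·(e₃ − f₃), [e₂,f₂] = −a·(e₃ − f₃). Then 𝔤 is solvable of derived length exactly 3 (i.e. the derived series satisfies 𝔤⁽²⁾ ≠ 0 and 𝔤⁽³⁾ = 0), and 𝔤 is not nilpotent. -/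
/-!
Write `eᵢ = b (i-1)`, `fᵢ = b (i+2)` and `z = e₃ - f₃`. The element `z` is central, every bracket
of basis vectors lies in `span {e₁, e₂, f₁, f₂, z}`, and brackets among those five vectors lie in
`ℂ z`; hence `𝔤⁽¹⁾ ⊆ span {e₁, e₂, f₁, f₂, z}`, `𝔤⁽²⁾ ⊆ ℂ z` and `𝔤⁽³⁾ = 0`.
Conversely, if `s ≠ 0` then `[e₁, e₃] = -is e₁` and `[f₁, f₃] = is f₁` put `e₁` and `f₁` in `𝔤⁽¹⁾`,
so `z = a⁻¹ [e₁, f₁] ∈ 𝔤⁽²⁾`; and since `e₁` is an eigenvector of `ad e₃` with a nonzero eigenvalue,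
`ad e₃` is not nilpotent, so neither is `𝔤`. If `s = 0`, then `t ≠ 0` and `e₂`, `f₂` take over.
-/

open LieAlgebra Submodule

section CommRing

variable {R L : Type*} [CommRing R] [LieRing L] [LieAlgebra R L]

theorem lie_mem_of_mem_span {s t : Set L} {p : Submodule R L}
    (h : ∀ x ∈ s, ∀ y ∈ t, ⁅x, y⁆ ∈ p) {x y : L} (hx : x ∈ span R s) (hy : y ∈ span R t) :
    ⁅x, y⁆ ∈ p := by
  have hle : map₂ (LieModule.toEnd R L L : L →ₗ[R] L →ₗ[R] L) (span R s) (span R t) ≤ p := by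
    rw [map₂_span_span, span_le]
    rintro _ ⟨x, hx, y, hy, rfl⟩
    exact h x hx y hy
  exact hle (apply_mem_map₂ _ hx hy)

theorem lie_mem_of_forall_lt {ι : Type*} [LinearOrder ι] {v : ι → L} {p : Submodule R L}
    (h : ∀ i j, i < j → ⁅v i, v j⁆ ∈ p) (i j : ι) : ⁅v i, v j⁆ ∈ p := by
  rcases lt_trichotomy i j with hij | rfl | hji
  · exact h i j hij
  · rw [lie_self]; exact p.zero_mem
  · rw [← lie_skew]; exact p.neg_mem (h j i hji)

theorem LieAlgebra.coe_derivedSeries_succ_le {ι : Type*} [LinearOrder ι] {v : ι → L}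
    {p : Submodule R L} {k : ℕ}
    (hk : (derivedSeries R L k : Submodule R L) ≤ span R (Set.range v))
    (h : ∀ i j, i < j → ⁅v i, v j⁆ ∈ p) : (derivedSeries R L (k + 1) : Submodule R L) ≤ p := by
  rw [derivedSeries_def, derivedSeriesOfIdeal_succ, LieIdeal.toLieSubalgebra_toSubmodule,
    LieSubmodule.lieIdeal_oper_eq_linear_span', span_le]
  rintro _ ⟨x, hx, y, hy, rfl⟩
  refine lie_mem_of_mem_span ?_ (hk hx) (hk hy)
  rintro _ ⟨i, rfl⟩ _ ⟨j, rfl⟩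
  exact lie_mem_of_forall_lt h i j

end CommRing

section Field

variable {K L M : Type*} [Field K] [LieRing L] [LieAlgebra K L]
  [AddCommGroup M] [Module K M] [LieRingModule L M]

theorem LieSubmodule.mem_lie_of_lie_eq_smul {I : LieIdeal K L} {N : LieSubmodule K L M}
    {x : L} {m m' : M} {c : K} (hx : x ∈ I) (hm : m ∈ N) (h : ⁅x, m⁆ = c • m') (hc : c ≠ 0) :
    m' ∈ ⁅I, N⁆ := by
  rw [← inv_smul_smul₀ hc m', ← h]
  exact smul_mem _ _ (lie_mem_lie hx hm)

theorem LieAlgebra.mem_derivedSeries_succ_of_lie_eq_smul {k : ℕ} {x y z : L} {c : K}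
    (hx : x ∈ derivedSeries K L k) (hy : y ∈ derivedSeries K L k) (h : ⁅x, y⁆ = c • z)
    (hc : c ≠ 0) : z ∈ derivedSeries K L (k + 1) := by
  rw [derivedSeries_def, derivedSeriesOfIdeal_succ]
  exact LieSubmodule.mem_lie_of_lie_eq_smul hx hy h hc

theorem LieModule.not_isNilpotent_of_lie_eq_smul [LieModule K L M] {x : L} {m : M} {c : K}
    (hm : m ≠ 0) (hc : c ≠ 0) (h : ⁅x, m⁆ = c • m) : ¬ LieModule.IsNilpotent L M := by
  intro hnil
  have hev : (toEnd K L M x).HasEigenvalue c :=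
    Module.End.hasEigenvalue_of_hasEigenvector
      (Module.End.hasEigenvector_iff.2 ⟨Module.End.mem_eigenspace_iff.2 h, hm⟩)
  exact hc (hev.isNilpotent_of_isNilpotent (isNilpotent_toEnd_of_isNilpotent K L M x)).eq_zero

end Field

structure IsAstBasis {L : Type*} [LieRing L] [LieAlgebra ℂ L] (a s t : ℝ)
    (b : Module.Basis (Fin 6) ℂ L) : Prop where
  h01 : ⁅b 0, b 1⁆ = 0
  h02 : ⁅b 0, b 2⁆ = (-(Complex.I * (s : ℂ))) • b 0
  h03 : ⁅b 0, b 3⁆ = (a : ℂ) • (b 2 - b 5)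
  h04 : ⁅b 0, b 4⁆ = 0
  h05 : ⁅b 0, b 5⁆ = (-(Complex.I * (s : ℂ))) • b 0
  h12 : ⁅b 1, b 2⁆ = (-(Complex.I * (t : ℂ))) • b 1
  h13 : ⁅b 1, b 3⁆ = 0
  h14 : ⁅b 1, b 4⁆ = (-(a : ℂ)) • (b 2 - b 5)
  h15 : ⁅b 1, b 5⁆ = (-(Complex.I * (t : ℂ))) • b 1
  h23 : ⁅b 2, b 3⁆ = -((Complex.I * (s : ℂ)) • b 3)
  h24 : ⁅b 2, b 4⁆ = -((Complex.I * (t : ℂ)) • b 4)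
  h25 : ⁅b 2, b 5⁆ = 0
  h34 : ⁅b 3, b 4⁆ = 0
  h35 : ⁅b 3, b 5⁆ = (Complex.I * (s : ℂ)) • b 3
  h45 : ⁅b 4, b 5⁆ = (Complex.I * (t : ℂ)) • b 4

namespace IsAstBasis

variable {L : Type*} [LieRing L] [LieAlgebra ℂ L] {a s t : ℝ} {b : Module.Basis (Fin 6) ℂ L}
  (hb : IsAstBasis a s t b)
include hb

theorem lie_basis_sub_eq_zero (i : Fin 6) : ⁅b i, b 2 - b 5⁆ = 0 := by
  fin_cases i <;>
    simp [lie_sub, ← lie_skew (b 3) (b 2), ← lie_skew (b 4) (b 2), ← lie_skew (b 5) (b 2),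
      hb.h02, hb.h05, hb.h12, hb.h15, hb.h23, hb.h24, hb.h25, hb.h35, hb.h45]

theorem derivedSeries_one_le : (derivedSeries ℂ L 1 : Submodule ℂ L) ≤
    span ℂ (Set.range ![b 0, b 1, b 3, b 4, b 2 - b 5]) := by
  refine coe_derivedSeries_succ_le (v := b) (by simp [b.span_eq]) fun i j hij => ?_
  fin_cases i <;> fin_cases j <;> simp only [Fin.mk_lt_mk, Nat.reduceLT] at hij <;>
    simp [hb.h01, hb.h02, hb.h03, hb.h04, hb.h05, hb.h12, hb.h13, hb.h14, hb.h15, hb.h23,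
      hb.h24, hb.h25, hb.h34, hb.h35, hb.h45] <;>
    exact smul_of_tower_mem _ _ (subset_span (by simp))

theorem derivedSeries_two_le : (derivedSeries ℂ L 2 : Submodule ℂ L) ≤
    span ℂ (Set.range ![b 2 - b 5]) := by
  refine coe_derivedSeries_succ_le hb.derivedSeries_one_le fun i j hij => ?_
  fin_cases i <;> fin_cases j <;> simp only [Fin.mk_lt_mk, Nat.reduceLT] at hij <;>
    simp [hb.h01, hb.h03, hb.h04, hb.h13, hb.h14, hb.h34, hb.lie_basis_sub_eq_zero] <;>
    exact smul_of_tower_mem _ _ (mem_span_singleton_self _)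

theorem derivedSeries_three_eq_bot : derivedSeries ℂ L 3 = ⊥ := by
  have h := coe_derivedSeries_succ_le (p := ⊥) hb.derivedSeries_two_le fun i j hij =>
    absurd hij (Subsingleton.elim i j).not_lt
  exact eq_bot_iff.2 fun x hx => (mem_bot ℂ).1 (h hx)

theorem sub_mem_derivedSeries_two (ha : a ≠ 0) (hst : s ≠ 0 ∨ t ≠ 0) :
    b 2 - b 5 ∈ derivedSeries ℂ L 2 := by
  have top (x : L) : x ∈ derivedSeries ℂ L 0 := LieSubmodule.mem_top x
  rcases hst with hs | ht
  · have h0 := mem_derivedSeries_succ_of_lie_eq_smul (top _) (top _) hb.h02 (by simp [hs])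
    have h3 := mem_derivedSeries_succ_of_lie_eq_smul (top _) (top _) hb.h35 (by simp [hs])
    exact mem_derivedSeries_succ_of_lie_eq_smul h0 h3 hb.h03 (by simpa)
  · have h1 := mem_derivedSeries_succ_of_lie_eq_smul (top _) (top _) hb.h12 (by simp [ht])
    have h4 := mem_derivedSeries_succ_of_lie_eq_smul (top _) (top _) hb.h45 (by simp [ht])
    exact mem_derivedSeries_succ_of_lie_eq_smul h1 h4 hb.h14 (by simpa)

theorem derivedSeries_two_ne_bot (ha : a ≠ 0) (hst : s ≠ 0 ∨ t ≠ 0) :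
    derivedSeries ℂ L 2 ≠ ⊥ := by
  intro h
  have hz := hb.sub_mem_derivedSeries_two ha hst
  rw [h, LieSubmodule.mem_bot, sub_eq_zero] at hz
  exact absurd (b.injective hz) (by decide)

theorem not_isNilpotent (hst : s ≠ 0 ∨ t ≠ 0) : ¬ LieRing.IsNilpotent L := by
  rcases hst with hs | ht
  · refine LieModule.not_isNilpotent_of_lie_eq_smul (K := ℂ) (x := b 2) (b.ne_zero 0)
      (c := Complex.I * s) (by simp [hs]) ?_
    rw [← lie_skew, hb.h02, neg_smul, neg_neg]
  · refine LieModule.not_isNilpotent_of_lie_eq_smul (K := ℂ) (x := b 2) (b.ne_zero 1)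
      (c := Complex.I * t) (by simp [ht]) ?_
    rw [← lie_skew, hb.h12, neg_smul, neg_neg]

end IsAstBasis

/-- The complexified Lie algebra `A_{s,t}` (the structure equations of the balanced BTP
Lie-Hermitian threefolds of middle type of the first family), for `(s,t) ≠ (0,0)`, is solvable
of derived length exactly 3 and is not nilpotent.  Here `e₁,e₂,e₃` correspond to `b 0, b 1, b 2`
and `fᵢ = conj(eᵢ)` to `b 3, b 4, b 5`; the listed hypotheses record all brackets among basis
vectors (up to antisymmetry), the unlisted pairs bracketing to zero. -/
theorem Ast_three_step_solvable (a s t : ℝ) (ha : 0 < a) (hst : (s, t) ≠ (0, 0))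
    (L : Type*) [LieRing L] [LieAlgebra ℂ L] (b : Module.Basis (Fin 6) ℂ L)
    (h01 : ⁅b 0, b 1⁆ = 0)
    (h02 : ⁅b 0, b 2⁆ = (-(Complex.I * (s : ℂ))) • b 0)
    (h03 : ⁅b 0, b 3⁆ = (a : ℂ) • (b 2 - b 5))
    (h04 : ⁅b 0, b 4⁆ = 0)
    (h05 : ⁅b 0, b 5⁆ = (-(Complex.I * (s : ℂ))) • b 0)
    (h12 : ⁅b 1, b 2⁆ = (-(Complex.I * (t : ℂ))) • b 1)
    (h13 : ⁅b 1, b 3⁆ = 0)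
    (h14 : ⁅b 1, b 4⁆ = (-(a : ℂ)) • (b 2 - b 5))
    (h15 : ⁅b 1, b 5⁆ = (-(Complex.I * (t : ℂ))) • b 1)
    (h23 : ⁅b 2, b 3⁆ = -((Complex.I * (s : ℂ)) • b 3))
    (h24 : ⁅b 2, b 4⁆ = -((Complex.I * (t : ℂ)) • b 4))
    (h25 : ⁅b 2, b 5⁆ = 0)
    (h34 : ⁅b 3, b 4⁆ = 0)
    (h35 : ⁅b 3, b 5⁆ = (Complex.I * (s : ℂ)) • b 3)
    (h45 : ⁅b 4, b 5⁆ = (Complex.I * (t : ℂ)) • b 4) :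
    (LieAlgebra.derivedSeries ℂ L 2 ≠ ⊥ ∧ LieAlgebra.derivedSeries ℂ L 3 = ⊥)
      ∧ ¬ LieRing.IsNilpotent L := by
  have hb : IsAstBasis a s t b :=
    ⟨h01, h02, h03, h04, h05, h12, h13, h14, h15, h23, h24, h25, h34, h35, h45⟩
  have hst' : s ≠ 0 ∨ t ≠ 0 := by rwa [Ne, Prod.mk.injEq, not_and_or] at hst
  exact ⟨⟨hb.derivedSeries_two_ne_bot ha.ne' hst', hb.derivedSeries_three_eq_bot⟩,
    hb.not_isNilpotent hst'⟩
end
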